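/- (Generating function of Legendre polynomials.) For every real number x, the map t ↦ (1 - 2tx + t²)^{-1/2} is real analytic in a neighborhood of t = 0, and for every n ≥ 0 its n-th Taylor coefficient at t = 0 equals p_n(x), the n-th Legendre polynomial given by Rodrigues' formula; equivalently, (1/n!)·(d/dt)^n (1 - 2tx + t²)^{-1/2} evaluated at t = 0 equals (1/(2^n n!))·(d/dx)^n [(x²-1)^n]. -/

import Mathlib

/-- The `n`-th Legendre polynomial, given by Rodrigues' formula
`p_n(x) = (1/(2^n n!))·(d/dx)^n [(x²-1)^n]`. -/
noncomputable def legendreP (n : ℕ) (x : ℝ) : ℝ :=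
  (1 / (2 ^ n * (Nat.factorial n : ℝ))) * iteratedDeriv n (fun y : ℝ => (y ^ 2 - 1) ^ n) x

/-!
Both sides satisfy Bonnet's recurrence `(n + 2) p_{n+2} = (2n + 3) x p_{n+1} - (n + 1) p_n` with
`p_0 = 1` and `p_1 = x`. For Rodrigues' formula this follows from polynomial identities for
`R_n = D^n (X² - 1)^n`, obtained from `D (X² - 1)^(n+1) = 2(n + 1) X (X² - 1)^n`. The generating
function `f` solves `(1 - 2tx + t²) f' = (x - t) f` near `t = 0`; differentiating this `n + 1` times
at `t = 0` with the Leibniz rule gives the same recurrence for `f⁽ⁿ⁾(0) / n!`.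
-/

open Polynomial Filter Topology
open scoped Nat

namespace Legendre

noncomputable def rodrigues (R : Type*) [CommRing R] (n : ℕ) : R[X] :=
  derivative^[n] ((X ^ 2 - 1) ^ n)

variable {R : Type*} [CommRing R]

theorem iterate_derivative_succ_X_mul (m : ℕ) (q : R[X]) :
    derivative^[m + 1] (X * q) =
      X * derivative^[m + 1] q + ((m : R[X]) + 1) * derivative^[m] q := by
  rw [mul_comm X, iterate_derivative_mul_X]
  simp only [Nat.add_sub_cancel, nsmul_eq_mul]
  push_cast
  ring

theorem derivative_X_sq_sub_one_pow_succ (n : ℕ) :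
    derivative ((X ^ 2 - 1 : R[X]) ^ (n + 1)) =
      ((2 * (n + 1) : ℕ) : R[X]) * (X * (X ^ 2 - 1) ^ n) := by
  rw [derivative_pow_succ]
  simp only [derivative_sub, derivative_X_sq, derivative_one, sub_zero, map_add, map_natCast,
    map_one, map_ofNat]
  push_cast
  ring

theorem iterate_derivative_X_sq_sub_one_pow_succ (k n : ℕ) :
    derivative^[k + 1] ((X ^ 2 - 1 : R[X]) ^ (n + 1)) =
      2 * ((n : R[X]) + 1) * derivative^[k] (X * (X ^ 2 - 1) ^ n) := by
  rw [Function.iterate_succ_apply, derivative_X_sq_sub_one_pow_succ, iterate_derivative_natCast_mul]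
  push_cast
  ring

theorem derivative_rodrigues_succ (n : ℕ) :
    derivative (rodrigues R (n + 1)) =
      2 * ((n : R[X]) + 1) *
        (X * derivative (rodrigues R n) + ((n : R[X]) + 1) * rodrigues R n) := by
  rw [rodrigues, ← Function.iterate_succ_apply' derivative,
    iterate_derivative_X_sq_sub_one_pow_succ, iterate_derivative_succ_X_mul,
    Function.iterate_succ_apply', rodrigues]

theorem rodrigues_succ (n : ℕ) :
    rodrigues R (n + 1) =
      2 * ((n : R[X]) + 1) * X * rodrigues R n + 2 * (X ^ 2 - 1) * derivative (rodrigues R n) := by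
  cases n with
  | zero =>
    simp [rodrigues, one_add_one_eq_two, C_ofNat]
  | succ m =>
    -- Expand `R_{m+2}` once through `D (X² - 1)^(m+2)` and once through
    -- `(X² - 1)^(m+2) = X (X q) - q`; the combination below eliminates `D^m q`.
    set q : R[X] := (X ^ 2 - 1) ^ (m + 1) with hq
    have hr : rodrigues R (m + 1) = derivative^[m + 1] q := rfl
    have viaDerivative :
        rodrigues R (m + 2) = 2 * ((m : R[X]) + 2) * derivative^[m + 1] (X * q) := by
      rw [rodrigues, iterate_derivative_X_sq_sub_one_pow_succ]
      push_cast
      ring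
    have viaProduct :
        rodrigues R (m + 2) = derivative^[m + 2] (X * (X * q)) - derivative^[m + 2] q := by
      rw [rodrigues, ← iterate_derivative_sub, hq]
      ring_nf
    clear_value q
    rw [iterate_derivative_succ_X_mul, ← hr] at viaDerivative
    rw [iterate_derivative_succ_X_mul, iterate_derivative_succ_X_mul, iterate_derivative_succ_X_mul,
      Function.iterate_succ_apply' _ (m + 1), ← hr] at viaProduct
    push_cast at viaProduct ⊢
    linear_combination 2 * viaProduct - viaDerivative

theorem rodrigues_add_two (n : ℕ) :
    rodrigues R (n + 2) =
      2 * (2 * (n : R[X]) + 3) * X * rodrigues R (n + 1) -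
        4 * ((n : R[X]) + 1) ^ 2 * rodrigues R n := by
  have h₂ := rodrigues_succ (R := R) (n + 1)
  have h₁ := rodrigues_succ (R := R) n
  have hd := derivative_rodrigues_succ (R := R) n
  push_cast at h₂
  linear_combination h₂ + 2 * (X ^ 2 - 1) * hd - 2 * ((n : R[X]) + 1) * X * h₁

theorem iteratedDeriv_eval {𝕜 : Type*} [NontriviallyNormedField 𝕜] (p : 𝕜[X]) (k : ℕ) :
    iteratedDeriv k (fun y => p.eval y) = fun y => (derivative^[k] p).eval y := by
  induction k with
  | zero => simp
  | succ k ih =>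
    ext y
    rw [iteratedDeriv_succ, ih, Function.iterate_succ_apply', Polynomial.deriv]

theorem legendreP_eq_eval_rodrigues (n : ℕ) (x : ℝ) :
    legendreP n x = (rodrigues ℝ n).eval x / (2 ^ n * n !) := by
  have h : (fun y : ℝ => (y ^ 2 - 1) ^ n) = fun y => ((X ^ 2 - 1 : ℝ[X]) ^ n).eval y := by
    ext y; simp
  rw [legendreP, h, iteratedDeriv_eval, rodrigues, one_div_mul_eq_div]

theorem legendreP_zero (x : ℝ) : legendreP 0 x = 1 := by
  simp [legendreP_eq_eval_rodrigues, rodrigues]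

theorem legendreP_one (x : ℝ) : legendreP 1 x = x := by
  norm_num [legendreP_eq_eval_rodrigues, rodrigues]

theorem legendreP_add_two (n : ℕ) (x : ℝ) :
    (n + 2) * legendreP (n + 2) x =
      (2 * n + 3) * x * legendreP (n + 1) x - (n + 1) * legendreP n x := by
  have h := congrArg (eval x) (rodrigues_add_two (R := ℝ) n)
  simp only [eval_sub, eval_mul, eval_add, eval_pow, eval_ofNat, eval_natCast, eval_X,
    eval_one] at h
  simp only [legendreP_eq_eval_rodrigues, h, Nat.factorial_succ]
  push_cast
  field_simp
  ring

section
variable {𝕜 : Type*} [NontriviallyNormedField 𝕜]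

theorem iteratedDeriv_pow_mul_zero {g : 𝕜 → 𝕜} (k n : ℕ) (hg : ContDiffAt 𝕜 n g 0) :
    iteratedDeriv n (fun t => t ^ k * g t) 0 = n.descFactorial k * iteratedDeriv (n - k) g 0 := by
  rw [iteratedDeriv_fun_mul (by fun_prop) hg]
  simp only [iteratedDeriv_fun_pow_zero, Nat.cast_ite, Nat.cast_zero, mul_ite, ite_mul, mul_zero,
    zero_mul]
  rw [Finset.sum_ite_eq']
  split_ifs with hk
  · rw [Nat.descFactorial_eq_factorial_mul_choose]
    push_cast
    ring
  · rw [Nat.descFactorial_eq_zero_iff_lt.mpr (by simpa using hk)]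
    simp

variable [CompleteSpace 𝕜]

theorem iteratedDeriv_add_two_of_ode {f : 𝕜 → 𝕜} {x : 𝕜} (hf : AnalyticAt 𝕜 f 0)
    (hode : (fun t => (1 - 2 * t * x + t ^ 2) * deriv f t) =ᶠ[𝓝 0] fun t => (x - t) * f t)
    (n : ℕ) :
    iteratedDeriv (n + 2) f 0 =
      (2 * n + 3) * x * iteratedDeriv (n + 1) f 0 - (n + 1) ^ 2 * iteratedDeriv n f 0 := by
  have hf' := hf.deriv.contDiffAt (n := (n + 1 : ℕ))
  have hf₀ := hf.contDiffAt (n := (n + 1 : ℕ))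
  -- `t ^ 1` rather than `t`, so that `iteratedDeriv_pow_mul_zero` applies to every term.
  have hlhs : (fun t => (1 - 2 * t * x + t ^ 2) * deriv f t) =
      fun t => deriv f t - 2 * x * (t ^ 1 * deriv f t) + t ^ 2 * deriv f t := by
    ext t; ring
  have hrhs : (fun t => (x - t) * f t) = fun t => x * f t - t ^ 1 * f t := by
    ext t; ring
  have key := hode.iteratedDeriv_eq (n + 1)
  rw [hlhs, hrhs, iteratedDeriv_fun_add (by fun_prop) (by fun_prop),
    iteratedDeriv_fun_sub (by fun_prop) (by fun_prop),
    iteratedDeriv_fun_sub (by fun_prop) (by fun_prop),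
    iteratedDeriv_const_mul _ (by fun_prop), iteratedDeriv_const_mul _ (by fun_prop),
    iteratedDeriv_pow_mul_zero 1 _ hf', iteratedDeriv_pow_mul_zero 2 _ hf',
    iteratedDeriv_pow_mul_zero 1 _ hf₀] at key
  have hsq : ((n + 1).descFactorial 2 : 𝕜) * iteratedDeriv (n + 1 - 2) (deriv f) 0 =
      n * (n + 1) * iteratedDeriv n f 0 := by
    rcases n with _ | n
    · simp
    · simp [Nat.descFactorial_succ, ← iteratedDeriv_succ']
  rw [hsq] at key
  simp only [Nat.descFactorial_one, Nat.add_sub_cancel, ← iteratedDeriv_succ'] at key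
  push_cast at key
  linear_combination key

end

theorem mul_deriv_rpow_const {g : ℝ → ℝ} {g' t : ℝ} (a : ℝ) (hg : HasDerivAt g g' t)
    (ht : 0 < g t) : g t * deriv (fun s => g s ^ a) t = a * g' * g t ^ a := by
  rw [(hg.rpow_const (Or.inl ht.ne')).deriv, Real.rpow_sub_one ht.ne']
  field_simp

noncomputable def genFun (x t : ℝ) : ℝ := (1 - 2 * t * x + t ^ 2) ^ (-(1 : ℝ) / 2)

theorem analyticAt_genFun (x : ℝ) : AnalyticAt ℝ (genFun x) 0 := by
  have h : genFun x = (fun s => (1 + s) ^ (-(1 : ℝ) / 2)) ∘ fun t => t ^ 2 - 2 * t * x := by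
    ext t; simp only [genFun, Function.comp]; ring_nf
  rw [h]
  exact Real.one_add_rpow_hasFPowerSeriesAt_zero.analyticAt.comp_of_eq (by fun_prop) (by simp)

theorem genFun_ode (x : ℝ) :
    (fun t => (1 - 2 * t * x + t ^ 2) * deriv (genFun x) t) =ᶠ[𝓝 0]
      fun t => (x - t) * genFun x t := by
  have hpos : ∀ᶠ t in 𝓝 (0 : ℝ), 0 < 1 - 2 * t * x + t ^ 2 :=
    (show ContinuousAt (fun t : ℝ => 1 - 2 * t * x + t ^ 2) 0 by fun_prop).eventually
      (eventually_gt_nhds (by norm_num))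
  filter_upwards [hpos] with t ht
  have hg : HasDerivAt (fun s => 1 - 2 * s * x + s ^ 2) (2 * t - 2 * x) t := by
    refine ((((hasDerivAt_id' t).const_mul 2).mul_const x).const_sub 1).fun_add
      (hasDerivAt_pow 2 t) |>.congr_deriv ?_
    push_cast
    ring
  rw [show genFun x = fun s => (1 - 2 * s * x + s ^ 2) ^ (-(1 : ℝ) / 2) from rfl,
    mul_deriv_rpow_const _ hg ht]
  ring

theorem genFun_taylorCoeff_add_two (x : ℝ) (n : ℕ) :
    (n + 2) * (iteratedDeriv (n + 2) (genFun x) 0 / (n + 2)!) =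
      (2 * n + 3) * x * (iteratedDeriv (n + 1) (genFun x) 0 / (n + 1)!) -
        (n + 1) * (iteratedDeriv n (genFun x) 0 / n !) := by
  rw [iteratedDeriv_add_two_of_ode (analyticAt_genFun x) (genFun_ode x), Nat.factorial_succ,
    Nat.factorial_succ]
  push_cast
  field_simp
  ring

theorem deriv_genFun_zero (x : ℝ) : deriv (genFun x) 0 = x := by
  simpa [genFun] using (genFun_ode x).eq_of_nhds

end Legendre

/-- Generating function of the Legendre polynomials: for every real `x`, the map
`t ↦ (1 - 2tx + t²)^(-1/2)` is real analytic near `t = 0` and its `n`-th Taylor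
coefficient at `t = 0`, namely `(1/n!)·(d/dt)^n (1-2tx+t²)^(-1/2)|_{t=0}`, equals `p_n(x)`. -/
theorem legendre_generating_function (x : ℝ) :
    AnalyticAt ℝ (fun t : ℝ => (1 - 2 * t * x + t ^ 2) ^ (-(1 : ℝ) / 2)) 0 ∧
      ∀ n : ℕ,
        iteratedDeriv n (fun t : ℝ => (1 - 2 * t * x + t ^ 2) ^ (-(1 : ℝ) / 2)) 0
            / (Nat.factorial n : ℝ)
          = legendreP n x := by
  refine ⟨Legendre.analyticAt_genFun x, fun n => ?_⟩
  change iteratedDeriv n (Legendre.genFun x) 0 / n ! = legendreP n x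
  induction n using Nat.twoStepInduction with
  | zero => simp [Legendre.legendreP_zero, Legendre.genFun]
  | one => simp [Legendre.legendreP_one, Legendre.deriv_genFun_zero]
  | more n ih₀ ih₁ =>
    refine mul_left_cancel₀ (by positivity : (n + 2 : ℝ) ≠ 0) ?_
    rw [Legendre.genFun_taylorCoeff_add_two, Legendre.legendreP_add_two, ih₀, ih₁]
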